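/- Let w₀, h₀ be positive integers. On the rectangular wall traced as nodes p_i for -w₀-h₀ ≤ i ≤ w₀+h₀ (indices modulo 2(w₀+h₀), general at p_0), a message 'h=h₀' is generated at node p_{-h₀} at time h₀ and a message 'w=w₀' is generated at node p_{w₀} at time w₀. Then every node p_j receives at least one message by time w₀+h₀; i.e., for every j with -w₀-h₀ ≤ j ≤ w₀+h₀, min( h₀ + d(j, -h₀), w₀ + d(j, w₀) ) ≤ w₀ + h₀, where d(j,k) = min(|j-k|, 2(w₀+h₀) - |j-k|) is the cyclic distance on a cycle of length 2(w₀+h₀). -/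
import Mathlib

/-- On the rectangular wall (a cycle of length `2(w₀+h₀)`), a message generated
at `p_{-h₀}` at time `h₀` and one generated at `p_{w₀}` at time `w₀` together
reach every node `p_j` by time `w₀ + h₀`. -/
theorem rect_wall_one_message (w₀ h₀ : ℤ) (hw : 0 < w₀) (hh : 0 < h₀)
    (j : ℤ) (hj1 : -(w₀ + h₀) ≤ j) (hj2 : j ≤ w₀ + h₀) :
    min (h₀ + min |j - (-h₀)| (2*(w₀ + h₀) - |j - (-h₀)|))
        (w₀ + min |j - w₀| (2*(w₀ + h₀) - |j - w₀|)) ≤ w₀ + h₀ := by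
  rcases abs_cases (j - (-h₀)) with ⟨e1, _⟩ | ⟨e1, _⟩ <;>
  rcases abs_cases (j - w₀) with ⟨e2, _⟩ | ⟨e2, _⟩ <;>
  simp only [e1, e2, min_le_iff, le_min_iff] <;> omega
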